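/- For all natural numbers a, c, d, m, p, we have ∑_{k=0}^{a} C(a,k)·C(c+d−a, p+k)·C(k,c)·C(m+k,d) = C(m−p, d−a−p)·C(m+c, a+p)·C(a,c). -/

import Mathlib

/-- Binomial coefficient for integers: `C x y` is the usual binomial coefficient
when `0 ≤ y ≤ x`, and `0` otherwise. -/
def C (x y : ℤ) : ℤ := if 0 ≤ y ∧ y ≤ x then (x.toNat.choose y.toNat : ℤ) else 0

/-!
Both sides vanish unless `c ≤ a ≤ c + d`. Then, writing `a = c + e` and `d = N + e`, the trinomial
revision `C(a,k) C(k,c) = C(a,c) C(a-c,k-c)` pulls out `C(a,c)` and leaves, with `M = m + c` and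
`q = p + c`, the identity `∑ⱼ C(e,j) C(N,q+j) C(M+j,N+e) = C(M-q,N-q) C(M,e+q)`.
Expanding `C(M+j,N+e) = ∑ᵢ C(j,i) C(M,N+e-i)` by Vandermonde and summing over `j` first, trinomial
revision, symmetry and Vandermonde give `C(e,i) C(N+e-i,e+q)`; one more trinomial revision extracts
`C(M,e+q)`, and a last Vandermonde convolution sums what remains to `C(M-q,N-q)`.
Since `C` vanishes off `0 ≤ y ≤ x`, Vandermonde holds for every integer lower index and over any
summation range containing the support.
-/

open Finset

lemma C_of_neg {x y : ℤ} (h : y < 0) : C x y = 0 := by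
  unfold C; rw [if_neg (by omega)]

lemma C_of_lt {x y : ℤ} (h : x < y) : C x y = 0 := by
  unfold C; rw [if_neg (by omega)]

lemma C_natCast (n k : ℕ) : C n k = n.choose k := by
  unfold C
  split_ifs with h
  · simp
  · rw [Nat.choose_eq_zero_of_lt (by omega), Nat.cast_zero]

lemma C_symm (x y : ℤ) : C x y = C x (x - y) := by
  by_cases h : 0 ≤ y ∧ y ≤ x
  · obtain ⟨k, rfl⟩ := Int.eq_ofNat_of_zero_le h.1
    obtain ⟨n, rfl⟩ := Int.eq_ofNat_of_zero_le (h.1.trans h.2)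
    have hkn : k ≤ n := by omega
    rw [← Nat.cast_sub hkn, C_natCast, C_natCast, Nat.choose_symm hkn]
  · unfold C; rw [if_neg h, if_neg (by omega)]

lemma C_mul_C (n k j : ℤ) : C n k * C k j = C n j * C (n - j) (k - j) := by
  by_cases h : 0 ≤ j ∧ j ≤ k
  · obtain ⟨j, rfl⟩ := Int.eq_ofNat_of_zero_le h.1
    obtain ⟨k, rfl⟩ := Int.eq_ofNat_of_zero_le (h.1.trans h.2)
    have hjk : j ≤ k := by omega
    rcases lt_or_ge n k with hnk | hkn
    · rw [C_of_lt hnk, C_of_lt (by omega : n - j < k - j)]; simp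
    obtain ⟨n, rfl⟩ := Int.eq_ofNat_of_zero_le (show (0 : ℤ) ≤ n by omega)
    rw [← Nat.cast_sub hjk, ← Nat.cast_sub (by omega : j ≤ n)]
    simp only [C_natCast]
    exact_mod_cast Nat.choose_mul hjk
  · rcases not_and_or.1 h with hj | hkj <;> push Not at *
    · rw [C_of_neg hj, C_of_neg hj]; simp
    · rw [C_of_lt hkj, C_of_neg (by omega : k - j < 0)]; simp

lemma C_vandermonde (A N : ℕ) {B : ℕ} (hAB : A ≤ B) (s : ℤ) :
    ∑ t ∈ range (B + 1), C A t * C N (s - t) = C (A + N) s := by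
  rcases lt_or_ge s 0 with hs | hs
  · rw [C_of_neg hs]
    exact sum_eq_zero fun t _ => by rw [C_of_neg (x := N) (by omega), mul_zero]
  lift s to ℕ using hs
  calc ∑ t ∈ range (B + 1), C A t * C N (s - t)
      = ∑ t ∈ range (B + s + 1), C A t * C N (s - t) :=
        sum_subset (range_subset_range.2 (by omega)) fun t _ ht => by
          rw [C_of_lt (by simp at ht; omega), zero_mul]
    _ = ∑ t ∈ range (s + 1), C A t * C N (s - t) :=
        (sum_subset (range_subset_range.2 (by omega)) fun t _ ht => by
          rw [C_of_neg (x := N) (by simp at ht; omega), mul_zero]).symm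
    _ = ∑ t ∈ range (s + 1), ((A.choose t * N.choose (s - t) : ℕ) : ℤ) :=
        sum_congr rfl fun t ht => by
          rw [← Nat.cast_sub (by simpa [Nat.lt_succ_iff] using ht), C_natCast, C_natCast,
            Nat.cast_mul]
    _ = C (A + N) s := by
      rw [← Nat.cast_add, C_natCast, Nat.add_choose_eq,
        Nat.sum_antidiagonal_eq_sum_range_succ_mk, Nat.cast_sum]

lemma sum_range_add_of_eq_zero {M : Type*} [AddCommMonoid M] {f : ℕ → M} {u : ℕ}
    (hf : ∀ k < u, f k = 0) (n : ℕ) :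
    ∑ k ∈ range (u + n), f k = ∑ j ∈ range n, f (u + j) := by
  rw [sum_range_add, sum_eq_zero fun k hk => hf k (mem_range.1 hk), zero_add]

lemma C_vandermonde_shift (A N u : ℕ) {B : ℕ} (h : u + A ≤ B) (s : ℤ) :
    ∑ t ∈ range (B + 1), C A (t - u) * C N (s - t) = C (A + N) (s - u) := by
  obtain ⟨r, rfl⟩ := Nat.exists_eq_add_of_le h
  rw [show u + A + r + 1 = u + (A + r + 1) by omega,
    sum_range_add_of_eq_zero fun t ht => by rw [C_of_neg (by omega), zero_mul],
    ← C_vandermonde A N (Nat.le_add_right A r) (s - u)]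
  refine sum_congr rfl fun t _ => ?_
  rw [Nat.cast_add, add_sub_cancel_left, sub_sub]

lemma sum_C_add_mul_C_mul (c e : ℕ) (f : ℤ → ℤ) :
    ∑ k ∈ range (c + e + 1), C (c + e : ℕ) k * C k c * f k =
      C (c + e : ℕ) c * ∑ j ∈ range (e + 1), C e j * f ((c : ℤ) + j) := by
  rw [mul_sum, add_assoc,
    sum_range_add_of_eq_zero fun k hk => by rw [C_of_lt (x := k) (by omega)]; simp]
  refine sum_congr rfl fun j _ => ?_
  simp only [C_mul_C, Nat.cast_add, add_sub_cancel_left, mul_assoc]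

lemma sum_C_mul_C_mul_C_add (e N q : ℕ) {i : ℕ} (hi : i ≤ e) :
    ∑ j ∈ range (e + 1), C e j * C j i * C N ((q : ℤ) + j) =
      C e i * C ((N : ℤ) + e - i) ((e : ℤ) + q) := by
  calc ∑ j ∈ range (e + 1), C e j * C j i * C N ((q : ℤ) + j)
      = C e i * ∑ j ∈ range (e + 1), C (e - i : ℕ) (j - i) * C N ((N - q : ℤ) - j) := by
        rw [mul_sum]
        refine sum_congr rfl fun j _ => ?_
        rw [C_mul_C, C_symm N, Nat.cast_sub hi, mul_assoc, sub_sub, add_comm (q : ℤ)]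
    _ = C e i * C ((N : ℤ) + e - i) ((e : ℤ) + q) := by
        rw [C_vandermonde_shift (e - i) N i (by omega)]
        congr 1
        rw [C_symm]
        congr 1 <;> omega

lemma sum_C_mul_C_add_mul_C_add (e N M q : ℕ) :
    ∑ j ∈ range (e + 1), C e j * C N ((q : ℤ) + j) * C ((M : ℤ) + j) ((N : ℤ) + e) =
      C ((M : ℤ) - q) ((N : ℤ) - q) * C M ((e : ℤ) + q) := by
  calc ∑ j ∈ range (e + 1), C e j * C N ((q : ℤ) + j) * C ((M : ℤ) + j) ((N : ℤ) + e)
      = ∑ j ∈ range (e + 1), ∑ i ∈ range (e + 1),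
          C e j * C N ((q : ℤ) + j) * (C j i * C M ((N : ℤ) + e - i)) := by
        refine sum_congr rfl fun j hj => ?_
        rw [← mul_sum, add_comm (M : ℤ),
          C_vandermonde j M (Nat.lt_succ_iff.1 (mem_range.1 hj))]
    _ = ∑ i ∈ range (e + 1), C M ((N : ℤ) + e - i) *
          ∑ j ∈ range (e + 1), C e j * C j i * C N ((q : ℤ) + j) := by
        rw [sum_comm]
        refine sum_congr rfl fun i _ => ?_
        rw [mul_sum]
        exact sum_congr rfl fun j _ => by ring
    _ = C M ((e : ℤ) + q) *
          ∑ i ∈ range (e + 1), C e i * C ((M : ℤ) - (e + q)) ((N : ℤ) - q - i) := by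
        rw [mul_sum]
        refine sum_congr rfl fun i hi => ?_
        rw [sum_C_mul_C_mul_C_add e N q (Nat.lt_succ_iff.1 (mem_range.1 hi)), ← mul_assoc,
          mul_comm _ (C e i), mul_assoc, C_mul_C, mul_left_comm]
        congr 3
        omega
    _ = C ((M : ℤ) - q) ((N : ℤ) - q) * C M ((e : ℤ) + q) := by
        rcases lt_or_ge M (e + q) with hM | hM
        · rw [C_of_lt (x := M) (by omega)]; simp
        obtain ⟨r, rfl⟩ := Nat.exists_eq_add_of_le hM
        rw [show ((e + q + r : ℕ) : ℤ) - (e + q) = r by omega,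
          C_vandermonde e r le_rfl, mul_comm]
        congr 2
        omega

theorem stmt_10 (a c d m p : ℕ) :
    ∑ k ∈ Finset.range (a + 1), C a k * C ((c : ℤ) + d - a) ((p : ℤ) + k) * C k c * C ((m : ℤ) + k) d = C ((m : ℤ) - p) ((d : ℤ) - a - p) * C ((m : ℤ) + c) ((a : ℤ) + p) * C a c := by
  rcases lt_or_ge a c with hac | hca
  · rw [C_of_lt (x := a) (by omega), mul_zero]
    exact sum_eq_zero fun k hk => by
      rw [C_of_lt (x := k) (y := c) (by simp at hk; omega)]; simp
  rcases lt_or_ge (c + d) a with had | had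
  · rw [C_of_neg (x := (m : ℤ) - p) (by omega), zero_mul, zero_mul]
    exact sum_eq_zero fun k _ => by rw [C_of_lt (x := (c : ℤ) + d - a) (by omega)]; simp
  obtain ⟨e, rfl⟩ := Nat.exists_eq_add_of_le hca
  obtain ⟨N, rfl⟩ : ∃ N, d = N + e := ⟨d - e, by omega⟩
  have hcore := sum_C_mul_C_add_mul_C_add e N (m + c) (p + c)
  push_cast at hcore
  calc _ = ∑ k ∈ range (c + e + 1), C (c + e : ℕ) k * C k c *
          (C N ((p : ℤ) + k) * C ((m : ℤ) + k) ((N : ℤ) + e)) :=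
        sum_congr rfl fun k _ => by
          rw [show (c : ℤ) + (N + e : ℕ) - (c + e : ℕ) = N by omega]
          push_cast
          ring
    _ = C (c + e : ℕ) c * ∑ j ∈ range (e + 1), C e j *
          (C N ((p : ℤ) + (c + j)) * C ((m : ℤ) + (c + j)) ((N : ℤ) + e)) :=
        sum_C_add_mul_C_mul c e fun k => C N ((p : ℤ) + k) * C ((m : ℤ) + k) ((N : ℤ) + e)
    _ = _ := by
        simp only [← add_assoc, ← mul_assoc]
        rw [hcore, mul_comm]
        congr 3 <;> omega
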